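/- arXiv:1201.0716 — 7 statements merged into one kernel-verified Lean document; each statement's English description precedes it below -/
import Mathlib

section
/- Let E be a measurable subset of R^p with finite positive Lebesgue measure, let μ be a probability measure on R^p supported in E with density f with respect to Lebesgue measure, and let F ⊆ E be measurable. Then the differential entropy Ent(μ) = -∫ f log f satisfies Ent(μ) ≤ μ(F)·log(Leb(F)) + μ(E∖F)·log(Leb(E∖F)) - μ(F)·log(μ(F)) - (1-μ(F))·log(1-μ(F)). -/
/-!
Split `∫ f log f` into its integrals over `F` and `E \ F` (the density vanishes a.e. outside `E`).
On each piece `S`, Jensen's inequality for the convex function `t ↦ t log t` bounds the integral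
from below by `μ(S) log (μ(S) / Leb(S))`; adding the two bounds and using `μ(E \ F) = 1 - μ(F)`
gives the claim.
-/

open MeasureTheory Real

section

variable {α : Type*} [MeasurableSpace α] {ν : Measure α} {f : α → ℝ} {S : Set α}

theorem setIntegral_mul_log_div_le (hS : ν S ≠ ⊤) (hfnn : 0 ≤ᵐ[ν.restrict S] f)
    (hfi : IntegrableOn f S ν) (hgi : IntegrableOn (fun x => f x * log (f x)) S ν) :
    (∫ x in S, f x ∂ν) * log ((∫ x in S, f x ∂ν) / ν.real S) ≤
      ∫ x in S, f x * log (f x) ∂ν := by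
  rcases eq_or_ne (ν S) 0 with hS0 | hS0
  · simp [setIntegral_measure_zero _ hS0]
  have hjensen := convexOn_mul_log.map_set_average_le continuous_mul_log.continuousOn
    isClosed_Ici hS0 hS hfnn hfi hgi
  rw [setAverage_eq, setAverage_eq, smul_eq_mul, smul_eq_mul] at hjensen
  have hvol : 0 < ν.real S := ENNReal.toReal_pos hS0 hS
  calc (∫ x in S, f x ∂ν) * log ((∫ x in S, f x ∂ν) / ν.real S)
      = ν.real S * ((ν.real S)⁻¹ * ∫ x in S, f x ∂ν) *
          log ((ν.real S)⁻¹ * ∫ x in S, f x ∂ν) := by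
        field_simp
    _ ≤ ν.real S * ((ν.real S)⁻¹ * ∫ x in S, f x * log (f x) ∂ν) := by
        rw [mul_assoc]; gcongr
    _ = ∫ x in S, f x * log (f x) ∂ν := by field_simp

theorem measureReal_withDensity_ofReal [SFinite ν] (hf : AEMeasurable f ν)
    (hfnn : 0 ≤ᵐ[ν.restrict S] f) :
    (ν.withDensity fun x => ENNReal.ofReal (f x)).real S = ∫ x in S, f x ∂ν := by
  rw [measureReal_def, withDensity_apply',
    integral_eq_lintegral_of_nonneg_ae hfnn hf.aestronglyMeasurable.restrict]

theorem integrableOn_of_withDensity_ofReal_ne_top [SFinite ν] (hf : AEMeasurable f ν)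
    (hfnn : 0 ≤ᵐ[ν.restrict S] f)
    (hS : ν.withDensity (fun x => ENNReal.ofReal (f x)) S ≠ ⊤) : IntegrableOn f S ν := by
  rw [withDensity_apply'] at hS
  exact (lintegral_ofReal_ne_top_iff_integrable hf.aestronglyMeasurable.restrict hfnn).1 hS

theorem ae_imp_eq_zero_of_withDensity_ofReal_eq_zero (hf : AEMeasurable f ν) (hfnn : 0 ≤ᵐ[ν] f)
    (hS : ν.withDensity (fun x => ENNReal.ofReal (f x)) S = 0) : ∀ᵐ x ∂ν, x ∈ S → f x = 0 := by
  rw [withDensity_apply_eq_zero' hf.ennreal_ofReal, measure_eq_zero_iff_ae_notMem] at hS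
  filter_upwards [hS, hfnn] with x hx hx0 hxS
  exact le_antisymm (ENNReal.ofReal_eq_zero.1 (not_not.1 fun h => hx ⟨h, hxS⟩)) hx0

theorem mul_log_measureReal_sub_le_setIntegral_mul_log [SFinite ν] {μ : Measure α}
    (hμ : μ = ν.withDensity fun x => ENNReal.ofReal (f x)) (hf : AEMeasurable f ν)
    (hfnn : 0 ≤ᵐ[ν.restrict S] f) (hS : ν S ≠ ⊤) (hμS : μ S ≠ ⊤)
    (hgi : IntegrableOn (fun x => f x * log (f x)) S ν) :
    μ.real S * log (μ.real S) - μ.real S * log (ν.real S) ≤ ∫ x in S, f x * log (f x) ∂ν := by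
  subst hμ
  have hjensen := setIntegral_mul_log_div_le hS hfnn
    (integrableOn_of_withDensity_ofReal_ne_top hf hfnn hμS) hgi
  rw [← measureReal_withDensity_ofReal hf hfnn] at hjensen
  refine le_of_eq_of_le ?_ hjensen
  rcases eq_or_ne ((ν.withDensity fun x => ENNReal.ofReal (f x)).real S) 0 with h0 | h0
  · simp [h0]
  -- `μ ≪ ν` rules out the junk value `log (a / 0) = 0` for `a ≠ 0`.
  have hνS : ν.real S ≠ 0 := fun hν0 => h0 <| (measureReal_eq_zero_iff hμS).2 <|
    withDensity_absolutelyContinuous ν _ ((measureReal_eq_zero_iff hS).1 hν0)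
  rw [log_div h0 hνS]
  ring

end

theorem entropy_splitting_general
    {p : ℕ} (E F : Set (Fin p → ℝ)) (hF : MeasurableSet F)
    (hFE : F ⊆ E) (hEfin : volume E < ⊤)
    (f : (Fin p → ℝ) → ℝ) (hf : Measurable f) (hfnn : ∀ x, 0 ≤ f x)
    (μ : Measure (Fin p → ℝ)) [IsProbabilityMeasure μ]
    (hμ : μ = volume.withDensity (fun x => ENNReal.ofReal (f x)))
    (hsupp : μ Eᶜ = 0)
    (hintF : IntegrableOn (fun x => f x * Real.log (f x)) F)
    (hintEF : IntegrableOn (fun x => f x * Real.log (f x)) (E \ F)) :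
    -∫ x, f x * Real.log (f x) ≤
      (μ F).toReal * Real.log ((volume F).toReal)
        + (μ (E \ F)).toReal * Real.log ((volume (E \ F)).toReal)
        - (μ F).toReal * Real.log ((μ F).toReal)
        - (1 - (μ F).toReal) * Real.log (1 - (μ F).toReal) := by
  have hvanish : ∀ᵐ x ∂volume, x ∉ E → f x * log (f x) = 0 := by
    filter_upwards [ae_imp_eq_zero_of_withDensity_ofReal_eq_zero hf.aemeasurable
      (ae_of_all _ hfnn) (hμ ▸ hsupp)] with x hx hxE
    simp [hx hxE]
  have hsplit : ∫ x, f x * log (f x) =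
      (∫ x in F, f x * log (f x)) + ∫ x in E \ F, f x * log (f x) := by
    rw [← setIntegral_eq_integral_of_ae_compl_eq_zero hvanish, ← Set.sdiff_union_of_subset hFE,
      setIntegral_union Set.disjoint_sdiff_left hF hintEF hintF, Set.sdiff_union_of_subset hFE,
      add_comm]
  have hmass : μ.real (E \ F) = 1 - μ.real F := by
    rw [measureReal_sdiff hFE hF, measureReal_congr (ae_eq_univ.2 hsupp), probReal_univ]
  have hpiece := fun S (hSE : S ⊆ E) => mul_log_measureReal_sub_le_setIntegral_mul_log hμ
    hf.aemeasurable (ae_of_all _ hfnn)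
    ((measure_mono hSE).trans_lt hEfin).ne (measure_ne_top μ S)
  have hjensenF := hpiece F hFE hintF
  have hjensenEF := hpiece (E \ F) Set.sdiff_subset hintEF
  rw [hmass] at hjensenEF
  simp only [measureReal_def] at hjensenF hjensenEF hmass
  rw [hsplit, hmass]
  linarith

/-- entropy splitting inequality for a probability measure with
density `f` supported in `E`, split along `F ⊆ E`. -/
theorem entropy_splitting
    {p : ℕ} (E F : Set (Fin p → ℝ)) (hE : MeasurableSet E) (hF : MeasurableSet F)
    (hFE : F ⊆ E) (hEpos : 0 < volume E) (hEfin : volume E < ⊤)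
    (f : (Fin p → ℝ) → ℝ) (hf : Measurable f) (hfnn : ∀ x, 0 ≤ f x)
    (μ : Measure (Fin p → ℝ)) [IsProbabilityMeasure μ]
    (hμ : μ = volume.withDensity (fun x => ENNReal.ofReal (f x)))
    (hsupp : μ Eᶜ = 0)
    (hμF : 0 < (μ F).toReal) (hμF1 : (μ F).toReal < 1)
    (hint : Integrable (fun x => f x * Real.log (f x)))
    (hintF : IntegrableOn (fun x => f x * Real.log (f x)) F)
    (hintEF : IntegrableOn (fun x => f x * Real.log (f x)) (E \ F)) :
    -∫ x, f x * Real.log (f x) ≤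
      (μ F).toReal * Real.log ((volume F).toReal)
        + (μ (E \ F)).toReal * Real.log ((volume (E \ F)).toReal)
        - (μ F).toReal * Real.log ((μ F).toReal)
        - (1 - (μ F).toReal) * Real.log (1 - (μ F).toReal) :=
  entropy_splitting_general E F hF hFE hEfin f hf hfnn μ hμ hsupp hintF hintEF
end

section
/- Let T be a measurable map between measurable spaces and μ, ν probability measures on the source space. Then Ent(T_*μ | T_*ν) ≥ Ent(μ|ν), where T_*μ denotes the pushforward measure. -/
open MeasureTheory Real Classical

/-- Relative entropy (negative Kullback–Leibler divergence), valued in `EReal`: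
`Ent(μ|ν) = -∫ (dμ/dν) log (dμ/dν) dν` when `μ ≪ ν` (and the integrand is
integrable), and `-∞` otherwise. -/
noncomputable def relEntE {α : Type*} [MeasurableSpace α] (μ ν : Measure α) : EReal :=
  if μ ≪ ν ∧ Integrable
      (fun x => ((μ.rnDeriv ν x).toReal) * Real.log ((μ.rnDeriv ν x).toReal)) ν
  then ((-∫ x, ((μ.rnDeriv ν x).toReal) * Real.log ((μ.rnDeriv ν x).toReal) ∂ν : ℝ) : EReal)
  else ⊥

open InformationTheory

lemma relEntE_eq_neg_klDiv {α : Type*} [MeasurableSpace α] {μ ν : Measure α}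
    [IsFiniteMeasure μ] [IsFiniteMeasure ν] (h_univ : μ Set.univ = ν Set.univ) :
    relEntE μ ν = -(klDiv μ ν : EReal) := by
  unfold relEntE
  split_ifs with h
  · obtain ⟨hμν, h_int⟩ := h
    rw [integrable_rnDeriv_mul_log_iff hμν] at h_int
    rw [integral_rnDeriv_mul_log hμν, ← toReal_klDiv_of_measure_eq hμν h_univ, EReal.coe_neg,
      EReal.coe_ennreal_toReal (klDiv_ne_top hμν h_int)]
  · have h_top : klDiv μ ν = ⊤ := klDiv_eq_top_iff.2 fun hμν h_int ↦
      h ⟨hμν, (integrable_rnDeriv_mul_log_iff hμν).2 h_int⟩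
    rw [h_top, EReal.coe_ennreal_top, EReal.neg_top]

/-- data processing inequality, `Ent(T_*μ | T_*ν) ≥ Ent(μ | ν)`. -/
theorem relEntE_map_ge {α β : Type*} [MeasurableSpace α] [MeasurableSpace β]
    (T : α → β) (hT : Measurable T)
    (μ ν : Measure α) [IsProbabilityMeasure μ] [IsProbabilityMeasure ν] :
    relEntE μ ν ≤ relEntE (μ.map T) (ν.map T) := by
  have : IsProbabilityMeasure (μ.map T) := Measure.isProbabilityMeasure_map hT.aemeasurable
  have : IsProbabilityMeasure (ν.map T) := Measure.isProbabilityMeasure_map hT.aemeasurable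
  rw [relEntE_eq_neg_klDiv (by simp), relEntE_eq_neg_klDiv (by simp), EReal.neg_le_neg_iff,
    EReal.coe_ennreal_le_coe_ennreal_iff]
  exact klDiv_map_le μ ν hT
end

section
/- Let E be a compact metric space and ν a probability measure on E. Then for any probability measure μ on E, Ent(μ|ν) = inf over bounded continuous real-valued functions φ on E of [log(∫_E exp(φ) dν) - ∫_E φ dμ]. -/
/-!
Write `f = dμ/dν` and `F(φ) = log ∫ e^φ dν - ∫ φ dμ`. Gibbs' inequality for `μ` against the
tilted measure `e^φ ν / ∫ e^φ dν` gives `Ent(μ|ν) ≤ F(φ)`. Conversely `log Z ≤ Z - 1` gives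
`F(φ) ≤ -∫ (f φ + 1 - e^φ) dν`; for `φ = log` of `f` clamped to `[e^{-n}, e^n]` the integrand is
nonnegative and increases to `f log f + 1 - f`, so by monotone convergence `F(φ)` approaches
`-KL(μ|ν)`, finite or not. If `μ` is not absolutely continuous, multiples of the indicator of a
`ν`-null, `μ`-charged set drive `F` to `-∞`. Bounded measurable `φ` may be replaced by bounded
continuous ones: on functions bounded by `n`, `F` is Lipschitz for the `L¹(μ + ν)` distance, in
which bounded continuous functions are dense.
-/

open MeasureTheory Real Classical BoundedContinuousFunction

open Filter Topology InformationTheory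

/-- `0 ≤ (b - a) * (x - b)` says that `b` lies between `a` and `x`. -/
lemma mul_log_sub_le_mul_log_sub {x a b : ℝ} (hx : 0 ≤ x) (ha : 0 < a) (hb : 0 < b)
    (h : 0 ≤ (b - a) * (x - b)) : x * log a - a ≤ x * log b - b := by
  have hlog : log a - log b ≤ a / b - 1 := by
    rw [← log_div ha.ne' hb.ne']
    exact log_le_sub_one_of_pos (div_pos ha hb)
  have hquot : x * (a / b - 1) ≤ a - b := by
    rw [div_sub_one hb.ne', mul_div_assoc', div_le_iff₀ hb]
    nlinarith
  nlinarith [mul_le_mul_of_nonneg_left hlog hx]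

/-- Clamping `t` to a larger interval lands between its clamp to the smaller interval and `t`. -/
lemma max_min_sub_max_min_mul_nonneg {l l' u u' t : ℝ} (hl : l' ≤ l) (hlu : l ≤ u) (hu : u ≤ u') :
    0 ≤ (max l' (min u' t) - max l (min u t)) * (t - max l' (min u' t)) := by
  rcases le_total t l' with h1 | h1
  · rw [min_eq_right (h1.trans (hl.trans (hlu.trans hu))), min_eq_right (h1.trans (hl.trans hlu)),
      max_eq_left h1, max_eq_left (h1.trans hl)]
    nlinarith
  rcases le_total t u' with h2 | h2
  · rw [min_eq_right h2, max_eq_right h1]; simp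
  · rw [min_eq_left h2, max_eq_right (hl.trans (hlu.trans hu)), min_eq_left (hu.trans h2),
      max_eq_right hlu]
    nlinarith

lemma exp_sub_exp_le_exp_mul_abs {a b n : ℝ} (hb : b ≤ n) : exp b - exp a ≤ exp n * |b - a| := by
  have h : exp b * (a - b + 1) ≤ exp a := by
    calc exp b * (a - b + 1) ≤ exp b * exp (a - b) := by gcongr; exact add_one_le_exp _
      _ = exp a := by rw [← exp_add]; ring_nf
  calc exp b - exp a ≤ exp b * |b - a| := by nlinarith [le_abs_self (b - a), exp_pos b]
    _ ≤ exp n * |b - a| := by gcongr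

lemma abs_sub_max_min_le {a t n : ℝ} (ha : |a| ≤ n) : |a - max (-n) (min n t)| ≤ |a - t| := by
  have hn : -n ≤ n := by linarith [abs_nonneg a]
  have h := Set.abs_projIcc_sub_projIcc (c := a) (d := t) hn
  rwa [Set.coe_projIcc, Set.coe_projIcc, min_eq_right (abs_le.1 ha).2,
    max_eq_right (abs_le.1 ha).1] at h

lemma monotone_mul_log_add_one_sub_clamp {t : ℝ} (ht : 0 ≤ t) :
    Monotone fun n : ℕ =>
      t * log (max (exp (-n)) (min (exp n) t)) + 1 - max (exp (-n)) (min (exp n) t) := by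
  intro m k hmk
  have hmk' : (m : ℝ) ≤ k := Nat.cast_le.2 hmk
  have h := mul_log_sub_le_mul_log_sub ht (lt_max_of_lt_left (exp_pos (-m)))
    (lt_max_of_lt_left (exp_pos (-k))) (max_min_sub_max_min_mul_nonneg
      (exp_le_exp.2 (neg_le_neg hmk')) (exp_le_exp.2 (by linarith [m.cast_nonneg (α := ℝ)]))
      (exp_le_exp.2 hmk') (t := t))
  linarith

lemma tendsto_mul_log_add_one_sub_clamp {t : ℝ} (ht : 0 ≤ t) :
    Tendsto (fun n : ℕ =>
      t * log (max (exp (-n)) (min (exp n) t)) + 1 - max (exp (-n)) (min (exp n) t))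
      atTop (𝓝 (klFun t)) := by
  rcases ht.eq_or_lt with rfl | ht
  · have h : Tendsto (fun n : ℕ => exp (-(n : ℝ))) atTop (𝓝 0) :=
      tendsto_exp_atBot.comp (tendsto_neg_atTop_atBot.comp tendsto_natCast_atTop_atTop)
    have hclamp (n : ℕ) : max (exp (-n : ℝ)) (min (exp n) 0) = exp (-n) := by
      rw [min_eq_right (exp_pos _).le, max_eq_left (exp_pos _).le]
    simpa [hclamp, klFun_zero] using (tendsto_const_nhds (x := (1 : ℝ))).sub h
  · refine tendsto_const_nhds.congr' ?_
    filter_upwards [eventually_ge_atTop ⌈|log t|⌉₊] with n hn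
    have hn' : |log t| ≤ n := (Nat.le_ceil _).trans (Nat.cast_le.2 hn)
    rw [min_eq_right ((log_le_iff_le_exp ht).1 (abs_le.1 hn').2),
      max_eq_right ((le_log_iff_exp_le ht).1 (abs_le.1 hn').1), klFun]

lemma mul_log_add_one_sub_clamp_nonneg {t : ℝ} (ht : 0 ≤ t) (n : ℕ) :
    0 ≤ t * log (max (exp (-n)) (min (exp n) t)) + 1 - max (exp (-n)) (min (exp n) t) := by
  simpa using monotone_mul_log_add_one_sub_clamp ht n.zero_le

noncomputable def donskerVaradhanFun {E : Type*} [MeasurableSpace E] (ν μ : Measure E)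
    (φ : E → ℝ) : ℝ :=
  log (∫ x, exp (φ x) ∂ν) - ∫ x, φ x ∂μ

section

variable {E : Type*} [MeasurableSpace E] {ν μ : Measure E}

lemma integrable_exp_of_le [IsFiniteMeasure ν] {φ : E → ℝ} (hφ : Measurable φ) {n : ℝ}
    (hφn : ∀ x, φ x ≤ n) : Integrable (fun x => exp (φ x)) ν :=
  .of_bound (by fun_prop) (exp n) (.of_forall fun x => by simpa using hφn x)

lemma integral_exp_sub_integral_exp_le [IsFiniteMeasure ν] {φ ψ : E → ℝ} {n : ℝ}
    (hφ : Measurable φ) (hψ : Measurable ψ) (hφn : ∀ x, |φ x| ≤ n) (hψn : ∀ x, |ψ x| ≤ n) :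
    ∫ x, exp (ψ x) ∂ν - ∫ x, exp (φ x) ∂ν ≤ exp n * ∫ x, |φ x - ψ x| ∂ν := by
  have hdiff : Integrable (fun x => |φ x - ψ x|) ν :=
    .of_bound (by fun_prop) (n + n) (.of_forall fun x => by
      simpa using (abs_sub _ _).trans (add_le_add (hφn x) (hψn x)))
  have hexpφ := integrable_exp_of_le (ν := ν) hφ fun x => (abs_le.1 (hφn x)).2
  have hexpψ := integrable_exp_of_le (ν := ν) hψ fun x => (abs_le.1 (hψn x)).2
  rw [← integral_sub hexpψ hexpφ, ← integral_const_mul]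
  refine integral_mono (hexpψ.sub hexpφ) (hdiff.const_mul _) fun x => ?_
  rw [abs_sub_comm]
  exact exp_sub_exp_le_exp_mul_abs (abs_le.1 (hψn x)).2

lemma exists_measurableSet_measure_eq_zero_ne_zero (h : ¬ μ ≪ ν) :
    ∃ s, MeasurableSet s ∧ ν s = 0 ∧ μ s ≠ 0 := by
  by_contra! hs
  exact h (.mk hs)

variable [IsProbabilityMeasure ν]

lemma exp_neg_le_integral_exp {φ : E → ℝ} (hφ : Measurable φ) {n : ℝ} (hφn : ∀ x, |φ x| ≤ n) :
    exp (-n) ≤ ∫ x, exp (φ x) ∂ν := by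
  calc exp (-n) = ∫ _, exp (-n) ∂ν := by simp
    _ ≤ ∫ x, exp (φ x) ∂ν :=
      integral_mono (integrable_const _) (integrable_exp_of_le hφ fun x => (abs_le.1 (hφn x)).2)
        fun x => exp_le_exp.2 (abs_le.1 (hφn x)).1

lemma log_integral_exp_sub_log_integral_exp_le {φ ψ : E → ℝ} {n : ℝ} (hφ : Measurable φ)
    (hψ : Measurable ψ) (hφn : ∀ x, |φ x| ≤ n) (hψn : ∀ x, |ψ x| ≤ n) :
    log (∫ x, exp (ψ x) ∂ν) - log (∫ x, exp (φ x) ∂ν) ≤ exp (2 * n) * ∫ x, |φ x - ψ x| ∂ν := by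
  set Zφ := ∫ x, exp (φ x) ∂ν
  set Zψ := ∫ x, exp (ψ x) ∂ν
  have hZφ : exp (-n) ≤ Zφ := exp_neg_le_integral_exp hφ hφn
  have hZφ₀ : 0 < Zφ := (exp_pos _).trans_le hZφ
  have hZψ : 0 < Zψ := integral_exp_pos (integrable_exp_of_le hψ fun x => (abs_le.1 (hψn x)).2)
  calc log Zψ - log Zφ ≤ Zψ / Zφ - 1 := by
        rw [← log_div hZψ.ne' hZφ₀.ne']; exact log_le_sub_one_of_pos (div_pos hZψ hZφ₀)
    _ = (Zψ - Zφ) / Zφ := by field_simp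
    _ ≤ exp n * (∫ x, |φ x - ψ x| ∂ν) / exp (-n) :=
        div_le_div₀ (by positivity) (integral_exp_sub_integral_exp_le hφ hψ hφn hψn)
          (exp_pos _) hZφ
    _ = exp (2 * n) * ∫ x, |φ x - ψ x| ∂ν := by
        rw [exp_neg, div_inv_eq_mul, mul_right_comm, ← exp_add, two_mul]

lemma relEntE_eq_neg_klDiv_s6 [IsProbabilityMeasure μ] : relEntE μ ν = -(klDiv μ ν : EReal) := by
  unfold relEntE
  by_cases hac : μ ≪ ν
  · by_cases hint : Integrable (llr μ ν) μ
    · rw [if_pos ⟨hac, (integrable_rnDeriv_mul_log_iff hac).2 hint⟩, integral_rnDeriv_mul_log hac,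
        ← toReal_klDiv_of_measure_eq hac (by simp), EReal.coe_neg,
        EReal.coe_ennreal_toReal (klDiv_ne_top hac hint)]
    · rw [if_neg fun h => hint ((integrable_rnDeriv_mul_log_iff hac).1 h.2),
        klDiv_of_not_integrable hint]
      simp
  · rw [if_neg fun h => hac h.1, klDiv_of_not_ac hac]
    simp

lemma neg_klDiv_le_donskerVaradhanFun [IsProbabilityMeasure μ] {φ : E → ℝ}
    (hφμ : Integrable φ μ) (hφν : Integrable (fun x => exp (φ x)) ν) :
    -(klDiv μ ν : EReal) ≤ donskerVaradhanFun ν μ φ := by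
  by_cases h : klDiv μ ν = ⊤
  · simp [h]
  obtain ⟨hac, hint⟩ := klDiv_ne_top_iff.1 h
  have := isProbabilityMeasure_tilted hφν
  have hgibbs := integral_llr_add_sub_measure_univ_nonneg
    (hac.trans (absolutelyContinuous_tilted hφν)) (integrable_llr_tilted_right hac hφμ hint hφν)
  rw [integral_llr_tilted_right hac hφμ hφν hint] at hgibbs
  rw [← EReal.coe_ennreal_toReal h, toReal_klDiv_of_measure_eq hac (by simp), ← EReal.coe_neg,
    EReal.coe_le_coe_iff, donskerVaradhanFun]
  simp only [probReal_univ] at hgibbs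
  linarith

lemma donskerVaradhanFun_indicator_const {s : Set E} (hs : MeasurableSet s) (hνs : ν s = 0)
    (c : ℝ) : donskerVaradhanFun ν μ (s.indicator fun _ => c) = -(μ.real s * c) := by
  have hexp : (fun x => exp (s.indicator (fun _ => c) x)) =ᵐ[ν] fun _ => 1 := by
    filter_upwards [measure_eq_zero_iff_ae_notMem.1 hνs] with x hx
    rw [Set.indicator_of_notMem hx, exp_zero]
  rw [donskerVaradhanFun, integral_congr_ae hexp, integral_indicator_const _ hs]
  simp

variable [IsFiniteMeasure μ]

lemma donskerVaradhanFun_le_add {φ ψ : E → ℝ} {n : ℝ} (hφ : Measurable φ) (hψ : Measurable ψ)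
    (hφn : ∀ x, |φ x| ≤ n) (hψn : ∀ x, |ψ x| ≤ n) :
    donskerVaradhanFun ν μ ψ ≤ donskerVaradhanFun ν μ φ
      + exp (2 * n) * ∫ x, |φ x - ψ x| ∂ν + ∫ x, |φ x - ψ x| ∂μ := by
  have hφμ : Integrable φ μ := .of_bound hφ.aestronglyMeasurable n (.of_forall hφn)
  have hψμ : Integrable ψ μ := .of_bound hψ.aestronglyMeasurable n (.of_forall hψn)
  have hμ : ∫ x, φ x ∂μ - ∫ x, ψ x ∂μ ≤ ∫ x, |φ x - ψ x| ∂μ := by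
    rw [← integral_sub hφμ hψμ]
    exact integral_mono (hφμ.sub hψμ) (hφμ.sub hψμ).abs fun x => le_abs_self _
  have hlog := log_integral_exp_sub_log_integral_exp_le (ν := ν) hφ hψ hφn hψn
  unfold donskerVaradhanFun
  linarith

lemma donskerVaradhanFun_le_neg_integral (hac : μ ≪ ν) {φ : E → ℝ} (hφ : Measurable φ) {n : ℝ}
    (hφn : ∀ x, |φ x| ≤ n) :
    donskerVaradhanFun ν μ φ ≤ -∫ x, ((μ.rnDeriv ν x).toReal * φ x + 1 - exp (φ x)) ∂ν := by
  have hfφ : Integrable (fun x => (μ.rnDeriv ν x).toReal * φ x) ν :=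
    Measure.integrable_toReal_rnDeriv.mul_bdd hφ.aestronglyMeasurable (.of_forall hφn)
  have hexp := integrable_exp_of_le (ν := ν) hφ fun x => (abs_le.1 (hφn x)).2
  have hμ : ∫ x, φ x ∂μ = ∫ x, (μ.rnDeriv ν x).toReal * φ x ∂ν := by
    simpa using (integral_rnDeriv_smul hac (f := φ)).symm
  have hfφ₁ : Integrable (fun x => (μ.rnDeriv ν x).toReal * φ x + 1) ν :=
    hfφ.add (integrable_const 1)
  rw [integral_sub hfφ₁ hexp, integral_add hfφ (integrable_const 1), donskerVaradhanFun, hμ]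
  have := log_le_sub_one_of_pos (integral_exp_pos hexp)
  simp only [integral_const, probReal_univ, smul_eq_mul, mul_one]
  linarith

end

section Truncation

variable {E : Type*} [MeasurableSpace E] (μ ν : Measure E)

/-- `max (-n) (min n (llr μ ν x))` where the density is positive, but `-n` where it vanishes
(`llr` has the junk value `log 0 = 0` there). -/
noncomputable def llrTrunc (n : ℕ) (x : E) : ℝ :=
  log (max (exp (-n)) (min (exp n) (μ.rnDeriv ν x).toReal))

variable {μ ν}

lemma exp_llrTrunc (n : ℕ) (x : E) :
    exp (llrTrunc μ ν n x) = max (exp (-n)) (min (exp n) (μ.rnDeriv ν x).toReal) :=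
  exp_log (lt_max_of_lt_left (exp_pos _))

@[fun_prop]
lemma measurable_llrTrunc (n : ℕ) : Measurable (llrTrunc μ ν n) := by
  unfold llrTrunc
  fun_prop

lemma abs_llrTrunc_le (n : ℕ) (x : E) : |llrTrunc μ ν n x| ≤ n := by
  rw [abs_le, ← exp_le_exp, ← exp_le_exp (y := (n : ℝ)), exp_llrTrunc]
  exact ⟨le_max_left _ _, max_le (exp_le_exp.2 (by linarith [n.cast_nonneg (α := ℝ)]))
    (min_le_left _ _)⟩

lemma tendsto_lintegral_llrTrunc [IsFiniteMeasure μ] [IsFiniteMeasure ν] (hac : μ ≪ ν) :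
    Tendsto (fun n => ∫⁻ x, ENNReal.ofReal
      ((μ.rnDeriv ν x).toReal * llrTrunc μ ν n x + 1 - exp (llrTrunc μ ν n x)) ∂ν)
      atTop (𝓝 (klDiv μ ν)) := by
  rw [klDiv_eq_lintegral_klFun_of_ac hac]
  refine lintegral_tendsto_of_tendsto_of_monotone (fun n => by fun_prop)
    (.of_forall fun x => ?_) (.of_forall fun x => ?_)
  · intro m k hmk
    refine ENNReal.ofReal_le_ofReal ?_
    simp only [exp_llrTrunc]
    exact monotone_mul_log_add_one_sub_clamp ENNReal.toReal_nonneg hmk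
  · refine (ENNReal.continuous_ofReal.tendsto _).comp ?_
    simp only [exp_llrTrunc]
    exact tendsto_mul_log_add_one_sub_clamp ENNReal.toReal_nonneg

lemma coe_donskerVaradhanFun_llrTrunc_le [IsProbabilityMeasure ν] [IsFiniteMeasure μ]
    (hac : μ ≪ ν) (n : ℕ) :
    (donskerVaradhanFun ν μ (llrTrunc μ ν n) : EReal) ≤ -(∫⁻ x, ENNReal.ofReal
      ((μ.rnDeriv ν x).toReal * llrTrunc μ ν n x + 1 - exp (llrTrunc μ ν n x)) ∂ν : EReal) := by
  have hnonneg (x : E) :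
      0 ≤ (μ.rnDeriv ν x).toReal * llrTrunc μ ν n x + 1 - exp (llrTrunc μ ν n x) := by
    rw [exp_llrTrunc]
    exact mul_log_add_one_sub_clamp_nonneg ENNReal.toReal_nonneg n
  have hint : Integrable
      (fun x => (μ.rnDeriv ν x).toReal * llrTrunc μ ν n x + 1 - exp (llrTrunc μ ν n x)) ν :=
    ((Measure.integrable_toReal_rnDeriv.mul_bdd (measurable_llrTrunc n).aestronglyMeasurable
      (.of_forall (abs_llrTrunc_le n))).add (integrable_const 1)).sub
      (integrable_exp_of_le (measurable_llrTrunc n) fun x => (abs_le.1 (abs_llrTrunc_le n x)).2)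
  rw [← ofReal_integral_eq_lintegral_ofReal hint (.of_forall hnonneg), EReal.coe_ennreal_ofReal,
    max_eq_left (integral_nonneg hnonneg), ← EReal.coe_neg, EReal.coe_le_coe_iff]
  exact donskerVaradhanFun_le_neg_integral hac (measurable_llrTrunc n) (abs_llrTrunc_le n)

end Truncation

section Approximation

variable {E : Type*} [PseudoMetricSpace E] [MeasurableSpace E] [BorelSpace E] {ν μ : Measure E}
  [IsProbabilityMeasure ν] [IsFiniteMeasure μ]

lemma exists_donskerVaradhanFun_le_add {φ : E → ℝ} (hφ : Measurable φ) {n : ℝ}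
    (hφn : ∀ x, |φ x| ≤ n) {ε : ℝ} (hε : 0 < ε) :
    ∃ ψ : E →ᵇ ℝ, donskerVaradhanFun ν μ ψ ≤ donskerVaradhanFun ν μ φ + ε := by
  set δ := ε / (exp (2 * n) + 1)
  have hφρ : Integrable φ (μ + ν) := .of_bound hφ.aestronglyMeasurable n (.of_forall hφn)
  obtain ⟨g, hg, hgρ⟩ := hφρ.exists_boundedContinuous_integral_sub_le (ε := δ) (by positivity)
  set ψ : E →ᵇ ℝ := const E (-n) ⊔ (const E n ⊓ g)
  have hψ_apply (x : E) : ψ x = max (-n) (min n (g x)) := rfl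
  have hψ (x : E) : |φ x - ψ x| ≤ ‖φ x - g x‖ := hψ_apply x ▸ abs_sub_max_min_le (hφn x)
  have hψn (x : E) : |ψ x| ≤ n := by
    rw [hψ_apply, abs_le]
    exact ⟨le_max_left _ _, max_le (by linarith [(abs_nonneg _).trans (hφn x)]) (min_le_left _ _)⟩
  have hdiff : Integrable (fun x => |φ x - ψ x|) (μ + ν) := (hφρ.sub (ψ.integrable _)).abs
  have hclose : ∫ x, |φ x - ψ x| ∂μ + ∫ x, |φ x - ψ x| ∂ν ≤ δ := by
    rw [← integral_add_measure (integrable_add_measure.1 hdiff).1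
      (integrable_add_measure.1 hdiff).2]
    exact (integral_mono hdiff (hφρ.sub hgρ).norm hψ).trans hg
  refine ⟨ψ, (donskerVaradhanFun_le_add hφ ψ.continuous.measurable hφn hψn).trans ?_⟩
  have hμ : 0 ≤ ∫ x, |φ x - ψ x| ∂μ := integral_nonneg fun _ => abs_nonneg _
  have hν : 0 ≤ ∫ x, |φ x - ψ x| ∂ν := integral_nonneg fun _ => abs_nonneg _
  have hδ : (exp (2 * n) + 1) * δ = ε := mul_div_cancel₀ ε (by positivity)
  nlinarith [exp_pos (2 * n)]

lemma iInf_donskerVaradhanFun_le {φ : E → ℝ} (hφ : Measurable φ) {n : ℝ}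
    (hφn : ∀ x, |φ x| ≤ n) :
    ⨅ ψ : E →ᵇ ℝ, (donskerVaradhanFun ν μ ψ : EReal) ≤ donskerVaradhanFun ν μ φ := by
  refine le_of_forall_gt_imp_ge_of_dense fun c hc => ?_
  obtain ⟨r, hφr, hrc⟩ := EReal.exists_between_coe_real hc
  obtain ⟨ψ, hψ⟩ := exists_donskerVaradhanFun_le_add (ν := ν) (μ := μ) hφ hφn
    (sub_pos.2 (EReal.coe_lt_coe_iff.1 hφr))
  exact (iInf_le _ ψ).trans ((EReal.coe_le_coe_iff.2 (by linarith)).trans hrc.le)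

end Approximation

lemma iInf_donskerVaradhanFun_le_neg_klDiv {E : Type*} [PseudoMetricSpace E] [MeasurableSpace E]
    [BorelSpace E] {ν μ : Measure E} [IsProbabilityMeasure ν] [IsFiniteMeasure μ] :
    ⨅ ψ : E →ᵇ ℝ, (donskerVaradhanFun ν μ ψ : EReal) ≤ -(klDiv μ ν : EReal) := by
  by_cases hac : μ ≪ ν
  · have hlim := (continuous_neg.tendsto _).comp
      ((continuous_coe_ennreal_ereal.tendsto _).comp (tendsto_lintegral_llrTrunc hac))
    exact ge_of_tendsto' hlim fun n =>
      (iInf_donskerVaradhanFun_le (measurable_llrTrunc n) (abs_llrTrunc_le n)).trans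
        (coe_donskerVaradhanFun_llrTrunc_le hac n)
  obtain ⟨s, hs, hνs, hμs⟩ := exists_measurableSet_measure_eq_zero_ne_zero hac
  have hμs' : 0 < μ.real s := ENNReal.toReal_pos hμs (measure_ne_top μ s)
  rw [klDiv_of_not_ac hac, EReal.coe_ennreal_top, EReal.neg_top, le_bot_iff,
    EReal.eq_bot_iff_forall_lt]
  intro r
  set c := (1 - r) / μ.real s
  have hF := donskerVaradhanFun_indicator_const (μ := μ) hs hνs c
  rw [mul_div_cancel₀ _ hμs'.ne'] at hF
  have hc (x : E) : |s.indicator (fun _ => c) x| ≤ |c| := by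
    by_cases hx : x ∈ s <;> simp [hx]
  calc _ ≤ (donskerVaradhanFun ν μ (s.indicator fun _ => c) : EReal) :=
        iInf_donskerVaradhanFun_le (measurable_const.indicator hs) hc
    _ < r := by rw [hF]; exact EReal.coe_lt_coe_iff.2 (by linarith)

theorem relEntE_donsker_varadhan_general
    {E : Type*} [MetricSpace E]
    [MeasurableSpace E] [BorelSpace E]
    (ν μ : Measure E) [IsProbabilityMeasure ν] [IsProbabilityMeasure μ] :
    relEntE μ ν =
      ⨅ φ : E →ᵇ ℝ,
        ((Real.log (∫ x, Real.exp (φ x) ∂ν) - ∫ x, φ x ∂μ : ℝ) : EReal) := by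
  rw [relEntE_eq_neg_klDiv_s6]
  refine le_antisymm (le_iInf fun ψ => ?_) iInf_donskerVaradhanFun_le_neg_klDiv
  exact neg_klDiv_le_donskerVaradhanFun (ψ.integrable μ) (integrable_exp_of_le
    ψ.continuous.measurable fun x => (le_abs_self _).trans (ψ.norm_coe_le_norm x))

/-- Donsker–Varadhan variational formula on a compact metric space:
`Ent(μ|ν) = inf_φ [ log ∫ e^φ dν - ∫ φ dμ ]` over bounded continuous `φ`. -/
theorem relEntE_donsker_varadhan
    {E : Type*} [MetricSpace E] [CompactSpace E]
    [MeasurableSpace E] [BorelSpace E]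
    (ν μ : Measure E) [IsProbabilityMeasure ν] [IsProbabilityMeasure μ] :
    relEntE μ ν =
      ⨅ φ : E →ᵇ ℝ,
        ((Real.log (∫ x, Real.exp (φ x) ∂ν) - ∫ x, φ x ∂μ : ℝ) : EReal) :=
  relEntE_donsker_varadhan_general ν μ
end

section
/- Let K be a non-empty convex weak-* compact subset of the topological dual of a separable Fréchet space E. Then K is the weak-* closed convex hull of the set of its weak-* exposed points; in particular this set is non-empty. -/
open Classical

/-- A weak-* exposed point of a set `K` in the dual of a complex topological
vector space `E`: some `x ∈ E` has real part attaining its strict maximum over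
`K` exactly at `f`. -/
def IsWeakStarExposed {E : Type*} [AddCommGroup E] [Module ℂ E] [TopologicalSpace E]
    (K : Set (WeakDual ℂ E)) (f : WeakDual ℂ E) : Prop :=
  f ∈ K ∧ ∃ x : E, ∀ g ∈ K, g ≠ f → (g x).re < (f x).re

/-!
For `x : E` let `exposedFace K x` be the set of `g ∈ K` at which `Re g x` is maximal. As `E` is a
Baire space, Banach–Steinhaus makes the weak-* compact set `K` equicontinuous, so the faces depend
upper semicontinuously on `x`. Hence, for fixed `u` and `ε`, the directions `x` whose face has
`Re (· u)`-width below `ε` form an open set; it is also dense, since moving `x` to `x + c • u` with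
`c > 0` small cuts the face down to (almost) the maximisers of `Re (· u)` on it. Intersecting over a
dense sequence of `u` and `ε = 1 / (k + 1)`, Baire gives a dense set of `x` with a singleton face,
and the point of such a face is weak-* exposed by `x`.

If some `f ∈ K` were outside the closed convex hull of the exposed points, Hahn–Banach in the
weak-* topology would separate it from them by `Re (· y)` for some `y : E`. A direction `x` near
`y` with a singleton face exposes a point `g`; by equicontinuity `Re g` and `Re f` change by less
than half the separation gap between `y` and `x`, contradicting `Re f x ≤ Re g x`.
-/

open Filter Topology Set

namespace WeakDual

variable {E : Type*} [AddCommGroup E] [Module ℂ E] [TopologicalSpace E]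

theorem continuous_re_apply (x : E) : Continuous fun g : WeakDual ℂ E => (g x).re :=
  Complex.continuous_re.comp (eval_continuous x)

theorem re_apply_add_ofReal_smul (g : WeakDual ℂ E) (x u : E) (c : ℝ) :
    (g (x + (c : ℂ) • u)).re = (g x).re + c * (g u).re := by
  rw [map_add, map_smul, smul_eq_mul, Complex.add_re, Complex.re_ofReal_mul]

theorem eq_of_forall_re_eq_of_dense {g h : WeakDual ℂ E} {s : Set E} (hs : Dense s)
    (H : ∀ y ∈ s, (g y).re = (h y).re) : g = h := by
  have hre : (fun y => (g y).re) = fun y => (h y).re :=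
    Continuous.ext_on hs (Complex.continuous_re.comp (map_continuous g))
      (Complex.continuous_re.comp (map_continuous h)) H
  have him (k : WeakDual ℂ E) (y : E) : (k y).im = -(k (Complex.I • y)).re := by
    simp [map_smul]
  exact DFunLike.ext _ _ fun y => Complex.ext (congrFun hre y) <| by
    rw [him, him, congrFun hre]

theorem exists_re_lt_of_notMem {C : Set (WeakDual ℂ E)} (hconv : Convex ℝ C)
    (hclosed : IsClosed C) {f : WeakDual ℂ E} (hf : f ∉ C) :
    ∃ (y : E) (α : ℝ), (∀ g ∈ C, (g y).re < α) ∧ α < (f y).re := by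
  have : IsScalarTower ℝ ℂ (WeakDual ℂ E) := inferInstanceAs (IsScalarTower ℝ ℂ (E →L[ℂ] ℂ))
  have hlcs : LocallyConvexSpace ℝ (WeakDual ℂ E) := WeakBilin.locallyConvexSpace
  -- with `@`, the module instances are unified from `hconv` instead of being synthesized
  obtain ⟨φ, α, hC, hf⟩ := @RCLike.geometric_hahn_banach_closed_point ℂ (WeakDual ℂ E)
    _ _ _ _ _ _ _ _ _ _ hlcs hconv hclosed hf
  obtain ⟨y, rfl⟩ := LinearMap.dualEmbedding_surjective (topDualPairing ℂ E) φ
  exact ⟨y, α, hC, hf⟩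

def exposedFace (K : Set (WeakDual ℂ E)) (x : E) : Set (WeakDual ℂ E) :=
  {g ∈ K | ∀ h ∈ K, (h x).re ≤ (g x).re}

variable {K : Set (WeakDual ℂ E)}

theorem exposedFace_subset (x : E) : exposedFace K x ⊆ K := fun _ hg => hg.1

theorem isCompact_exposedFace (hK : IsCompact K) (x : E) :
    IsCompact (exposedFace K x) := by
  refine hK.of_isClosed_subset ?_ (exposedFace_subset x)
  have : exposedFace K x = K ∩ ⋂ h ∈ K, {g | (h x).re ≤ (g x).re} := by
    ext g; simp [exposedFace]
  rw [this]
  exact hK.isClosed.inter <| isClosed_biInter fun h _ =>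
    isClosed_le continuous_const (continuous_re_apply x)

theorem exposedFace_nonempty (hK : IsCompact K) (hne : K.Nonempty) (x : E) :
    (exposedFace K x).Nonempty := by
  obtain ⟨g, hgK, hg⟩ := hK.exists_isMaxOn hne (continuous_re_apply x).continuousOn
  exact ⟨g, hgK, fun h hh => hg hh⟩

theorem exists_isWeakStarExposed_mem_exposedFace (hK : IsCompact K) (hne : K.Nonempty) {x : E}
    (hx : (exposedFace K x).Subsingleton) :
    ∃ f ∈ exposedFace K x, IsWeakStarExposed K f := by
  obtain ⟨f, hf⟩ := exposedFace_nonempty hK hne x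
  refine ⟨f, hf, hf.1, x, fun g hg hgf => (hf.2 g hg).lt_of_ne fun hfg => hgf ?_⟩
  exact hx ⟨hg, fun h hh => hfg ▸ hf.2 h hh⟩ hf

def thinFaceDirections (K : Set (WeakDual ℂ E)) (u : E) (ε : ℝ) : Set E :=
  {x | ∃ a, exposedFace K x ⊆ {g | (g u).re ∈ Ioo a (a + ε)}}

theorem exists_eventually_exposedFace_add_smul_subset (hK : IsCompact K) (hne : K.Nonempty)
    (x u : E) {ε : ℝ} (hε : 0 < ε) :
    ∃ a, ∀ᶠ c : ℝ in 𝓝[>] 0, exposedFace K (x + (c : ℂ) • u) ⊆ {g | (g u).re ∈ Ioo a (a + ε)} := by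
  obtain ⟨f, hfF, hfmax⟩ := (isCompact_exposedFace hK x).exists_isMaxOn
    (exposedFace_nonempty hK hne x) (continuous_re_apply u).continuousOn
  refine ⟨(f u).re - ε / 2, ?_⟩
  have hgap : ∀ g ∈ K ∩ {g | (f u).re + ε / 2 ≤ (g u).re}, 0 < (f x).re - (g x).re :=
    fun g ⟨hgK, hgu⟩ => sub_pos.2 <| (hfF.2 g hgK).lt_of_ne fun hgf => by
      have : (g u).re ≤ (f u).re := hfmax ⟨hgK, fun h hh => hgf ▸ hfF.2 h hh⟩
      linarith [show (f u).re + ε / 2 ≤ (g u).re from hgu]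
  obtain ⟨τ, hτ, hτL⟩ := (hK.inter_right (isClosed_le continuous_const (continuous_re_apply u))
    ).exists_forall_le' (continuous_const.sub (continuous_re_apply x)).continuousOn hgap
  obtain ⟨B, hB⟩ := (hK.image (continuous_re_apply u)).bddAbove
  have hsmall : ∀ᶠ c : ℝ in 𝓝 0, c * (B - (f u).re) < τ :=
    ((continuous_mul_const _).tendsto' 0 0 (zero_mul _)).eventually (eventually_lt_nhds hτ)
  filter_upwards [nhdsWithin_le_nhds hsmall, self_mem_nhdsWithin] with c hc (hcpos : 0 < c) g hg
  have hfg := hg.2 f hfF.1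
  rw [re_apply_add_ofReal_smul, re_apply_add_ofReal_smul] at hfg
  have hgx := hfF.2 g hg.1
  have hlow : (f u).re ≤ (g u).re := le_of_mul_le_mul_left (by linarith) hcpos
  refine ⟨by linarith, lt_of_not_ge fun hup => ?_⟩
  have : τ ≤ (f x).re - (g x).re := hτL g ⟨hg.1, show (f u).re + ε / 2 ≤ (g u).re by linarith⟩
  have : c * (g u).re ≤ c * B := mul_le_mul_of_nonneg_left (hB ⟨g, hg.1, rfl⟩) hcpos.le
  rw [mul_sub] at hc
  linarith

section TopologicalVectorSpace

variable [IsTopologicalAddGroup E] [ContinuousSMul ℂ E]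

theorem eventually_forall_norm_apply_lt [BaireSpace E] (hK : IsCompact K) {ε : ℝ}
    (hε : 0 < ε) : ∀ᶠ y in 𝓝 (0 : E), ∀ g ∈ K, ‖g y‖ < ε := by
  let p : K → Seminorm ℂ E := fun g => (g.1 : E →L[ℂ] ℂ).toLinearMap.toSeminorm
  have hbdd : BddAbove (range p) := Seminorm.bddAbove_range_iff.2 fun y => by
    have := (hK.image (continuous_norm.comp (eval_continuous y))).bddAbove
    rw [image_eq_range] at this
    exact this
  have hcont := Seminorm.continuous_iSup p
    (fun g => continuous_norm.comp (map_continuous (g.1 : E →L[ℂ] ℂ))) hbdd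
  have h0 : (⨆ g, p g : E → ℝ) 0 = 0 := by simp
  filter_upwards [hcont.continuousAt.eventually_lt continuousAt_const (h0 ▸ hε)] with y hy g hg
  calc ‖g y‖ = p ⟨g, hg⟩ y := rfl
    _ ≤ ⨆ g, p g y := le_ciSup (Seminorm.bddAbove_range_iff.1 hbdd y) ⟨g, hg⟩
    _ < ε := by simpa using hy

theorem eventually_forall_abs_re_apply_sub_lt [BaireSpace E] (hK : IsCompact K) (x : E)
    {ε : ℝ} (hε : 0 < ε) : ∀ᶠ x' in 𝓝 x, ∀ g ∈ K, |(g x').re - (g x).re| < ε := by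
  have hsub : Tendsto (fun x' => x' - x) (𝓝 x) (𝓝 0) :=
    (continuous_sub_right x).tendsto' x 0 (sub_self x)
  filter_upwards [hsub.eventually (eventually_forall_norm_apply_lt hK hε)] with x' hx' g hg
  calc |(g x').re - (g x).re| = |(g (x' - x)).re| := by rw [map_sub, Complex.sub_re]
    _ ≤ ‖g (x' - x)‖ := Complex.abs_re_le_norm _
    _ < ε := hx' g hg

theorem isOpen_setOf_exposedFace_subset [BaireSpace E] (hK : IsCompact K)
    {W : Set (WeakDual ℂ E)} (hW : IsOpen W) : IsOpen {x : E | exposedFace K x ⊆ W} := by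
  rw [isOpen_iff_eventually]
  intro x hx
  rcases K.eq_empty_or_nonempty with rfl | hne
  · exact Eventually.of_forall fun x' => (exposedFace_subset x').trans (empty_subset W)
  obtain ⟨f, hf⟩ := exposedFace_nonempty hK hne x
  have hgap : ∀ g ∈ K \ W, 0 < (f x).re - (g x).re := fun g hg => by
    refine sub_pos.2 ((hf.2 g hg.1).lt_of_ne fun hgf => hg.2 (hx ⟨hg.1, fun h hh => ?_⟩))
    exact hgf ▸ hf.2 h hh
  obtain ⟨τ, hτ, hτW⟩ := (hK.diff hW).exists_forall_le'
    (continuous_const.sub (continuous_re_apply x)).continuousOn hgap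
  filter_upwards [eventually_forall_abs_re_apply_sub_lt hK x (half_pos hτ)] with x' hx' g hg
  by_contra hgW
  have hfg := hg.2 f hf.1
  have : τ ≤ (f x).re - (g x).re := hτW g ⟨hg.1, hgW⟩
  have := abs_lt.1 (hx' f hf.1)
  have := abs_lt.1 (hx' g hg.1)
  linarith

theorem isOpen_thinFaceDirections [BaireSpace E] (hK : IsCompact K) (u : E) (ε : ℝ) :
    IsOpen (thinFaceDirections K u ε) := by
  simp only [thinFaceDirections, ofPred_exists]
  exact isOpen_iUnion fun a =>
    isOpen_setOf_exposedFace_subset hK (isOpen_Ioo.preimage (continuous_re_apply u))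

theorem dense_thinFaceDirections (hK : IsCompact K) (hne : K.Nonempty) (u : E) {ε : ℝ}
    (hε : 0 < ε) : Dense (thinFaceDirections K u ε) := by
  refine dense_iff_inter_open.2 fun U hU ⟨x, hxU⟩ => ?_
  obtain ⟨a, ha⟩ := exists_eventually_exposedFace_add_smul_subset hK hne x u hε
  have hnear : ∀ᶠ c : ℝ in 𝓝[>] 0, x + (c : ℂ) • u ∈ U := nhdsWithin_le_nhds <|
    ((by fun_prop : Continuous fun c : ℝ => x + (c : ℂ) • u).tendsto' 0 x (by simp)).eventually
      (hU.mem_nhds hxU)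
  obtain ⟨c, hcU, hc⟩ := (hnear.and ha).exists
  exact ⟨_, hcU, a, hc⟩

theorem dense_setOf_exposedFace_subsingleton [BaireSpace E] [TopologicalSpace.SeparableSpace E]
    (hK : IsCompact K) (hne : K.Nonempty) :
    Dense {x : E | (exposedFace K x).Subsingleton} := by
  have : Nonempty E := ⟨0⟩
  obtain ⟨e, he⟩ := TopologicalSpace.exists_dense_seq E
  have hD : Dense (⋂ p : ℕ × ℕ, thinFaceDirections K (e p.1) (1 / (p.2 + 1))) :=
    dense_iInter_of_isOpen (fun _ => isOpen_thinFaceDirections hK _ _)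
      (fun _ => dense_thinFaceDirections hK hne _ (by positivity))
  refine hD.mono fun x hx g hg h hh => eq_of_forall_re_eq_of_dense he ?_
  rintro _ ⟨n, rfl⟩
  have hclose (k : ℕ) : |(g (e n)).re - (h (e n)).re| ≤ 1 / (k + 1) := by
    obtain ⟨a, ha⟩ := mem_iInter.1 hx (n, k)
    obtain ⟨hg₁, hg₂⟩ := ha hg
    obtain ⟨hh₁, hh₂⟩ := ha hh
    rw [abs_le]
    constructor <;> linarith
  exact sub_eq_zero.1 <| abs_nonpos_iff.1 <|
    ge_of_tendsto' tendsto_one_div_add_atTop_nhds_zero_nat hclose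

end TopologicalVectorSpace

end WeakDual

theorem weakStarExposed_dense_general
    {E : Type*} [AddCommGroup E] [Module ℂ E] [TopologicalSpace E]
    [IsTopologicalAddGroup E] [ContinuousSMul ℂ E]
    [PolishSpace E]
    (K : Set (WeakDual ℂ E)) (hK : K.Nonempty) (hconv : Convex ℝ K)
    (hcomp : IsCompact K) :
    K = closure (convexHull ℝ {f | IsWeakStarExposed K f}) ∧
      {f | IsWeakStarExposed K f}.Nonempty := by
  have : Nonempty E := ⟨0⟩
  have hdense := WeakDual.dense_setOf_exposedFace_subsingleton hcomp hK
  have hexp {x : E} (hx : (WeakDual.exposedFace K x).Subsingleton) :=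
    WeakDual.exists_isWeakStarExposed_mem_exposedFace hcomp hK hx
  obtain ⟨x₀, hx₀⟩ := hdense.nonempty
  obtain ⟨f₀, -, hf₀⟩ := hexp hx₀
  have hsub : closure (convexHull ℝ {f | IsWeakStarExposed K f}) ⊆ K :=
    hcomp.isClosed.closure_subset_iff.2 (convexHull_min (fun f hf => hf.1) hconv)
  refine ⟨Subset.antisymm (fun f hfK => ?_) hsub, f₀, hf₀⟩
  by_contra hf
  have hconv' : Convex ℝ (closure (convexHull ℝ {f | IsWeakStarExposed K f})) :=
    (convex_convexHull ℝ _).closure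
  obtain ⟨y, α, hlt, hgt⟩ := WeakDual.exists_re_lt_of_notMem hconv' isClosed_closure hf
  obtain ⟨x, hx, hxy⟩ := hdense.inter_nhds_nonempty
    (WeakDual.eventually_forall_abs_re_apply_sub_lt hcomp y (half_pos (sub_pos.2 hgt)))
  obtain ⟨g, hgF, hg⟩ := hexp hx
  have := hlt g (subset_closure (subset_convexHull ℝ _ hg))
  have := hgF.2 f hfK
  have := abs_lt.1 (hxy f hfK)
  have := abs_lt.1 (hxy g hgF.1)
  linarith

/-- Sidney/Bishop: a nonempty convex weak-* compact subset of the
dual of a separable Fréchet space is the weak-* closed convex hull of its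
weak-* exposed points; in particular that set is nonempty. -/
theorem weakStarExposed_dense
    {E : Type*} [AddCommGroup E] [Module ℂ E] [TopologicalSpace E]
    [IsTopologicalAddGroup E] [ContinuousSMul ℂ E]
    [LocallyConvexSpace ℝ E] [PolishSpace E]
    (K : Set (WeakDual ℂ E)) (hK : K.Nonempty) (hconv : Convex ℝ K)
    (hcomp : IsCompact K) :
    K = closure (convexHull ℝ {f | IsWeakStarExposed K f}) ∧
      {f | IsWeakStarExposed K f}.Nonempty :=
  weakStarExposed_dense_general K hK hconv hcomp
end

section
/- Let μ, ν be probability measures on a measurable space, G a compact group with Haar probability measure acting measurably, with ν invariant under the averaging operation (ν_G = ν where ν_G is the Haar average of g_*ν). Then Ent(μ|ν) = Ent(μ|μ_G) + Ent(μ_G|ν), where μ_G denotes the Haar average of the measures g_*μ. -/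
open MeasureTheory Real

/-!
Since `dμ/dν = (dμ/dμ_G) (dμ_G/dν)` `μ`-a.e., taking `-∫ log · dμ` gives
`Ent(μ|ν) = Ent(μ|μ_G) - ∫ log (dμ_G/dν) dμ`. Both `μ_G` and `ν` are invariant under every
`g • ·`, hence so is the density `dμ_G/dν` (`ν`-a.e.), and averaging over the group does not
change the integral of an invariant function: `∫ log (dμ_G/dν) dμ = ∫ log (dμ_G/dν) dμ_G`,
which is `-Ent(μ_G|ν)`.
-/

/-- Relative entropy `-∫ (dμ/dν) log (dμ/dν) dν` as a real number (assuming
absolute continuity and integrability, which are hypothesized separately). -/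
noncomputable def entRel {α : Type*} [MeasurableSpace α] (μ ν : Measure α) : ℝ :=
  -∫ x, ((μ.rnDeriv ν x).toReal) * Real.log ((μ.rnDeriv ν x).toReal) ∂ν

namespace MeasureTheory

section GroupAverage

variable {G α : Type*} [MeasurableSpace G] [MeasurableSpace α]

/-- The Haar average `∫ g_* ρ dh(g)` of a measure `ρ`. -/
noncomputable def Measure.groupAverage [SMul G α] (h : Measure G) (ρ : Measure α) : Measure α :=
  (h.prod ρ).map (fun p : G × α => p.1 • p.2)

theorem Measure.integral_groupAverage_of_ae_smul_eq [SMul G α] [MeasurableSMul₂ G α]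
    (h : Measure G) [IsProbabilityMeasure h] {ρ : Measure α} [SFinite ρ] {F : α → ℝ}
    (hF : Measurable F) (hF_inv : ∀ g : G, ∀ᵐ x ∂ρ, F (g • x) = F x) :
    ∫ x, F x ∂h.groupAverage ρ = ∫ x, F x ∂ρ := by
  have hact : Measurable (fun p : G × α => p.1 • p.2) := measurable_fst.smul measurable_snd
  have h_ae : ∀ᵐ p ∂h.prod ρ, F (p.1 • p.2) = F p.2 :=
    (Measure.ae_prod_iff_ae_ae (measurableSet_eq_fun (hF.comp hact)
      (hF.comp measurable_snd))).2 (Filter.Eventually.of_forall hF_inv)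
  calc ∫ x, F x ∂h.groupAverage ρ = ∫ p, F p.2 ∂h.prod ρ := by
        rw [Measure.groupAverage, integral_map hact.aemeasurable hF.aestronglyMeasurable]
        exact integral_congr_ae h_ae
    _ = ∫ x, F x ∂ρ := by
        rw [← integral_map measurable_snd.aemeasurable hF.aestronglyMeasurable,
          Measure.map_snd_prod, measure_univ, one_smul]

variable [Group G] [MulAction G α]

theorem Measure.smulInvariantMeasure_groupAverage [MeasurableMul G] [MeasurableSMul₂ G α]
    (h : Measure G) [h.IsMulLeftInvariant] [SFinite h] (ρ : Measure α) [SFinite ρ] :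
    SMulInvariantMeasure G α (h.groupAverage ρ) := by
  refine ((smulInvariantMeasure_tfae G (h.groupAverage ρ)).out 0 5).2 fun g => ?_
  have hmul : Measurable (g * · : G → G) := measurable_const_mul g
  have hact : Measurable (fun p : G × α => p.1 • p.2) := measurable_fst.smul measurable_snd
  have hcomp : (g • ·) ∘ (fun p : G × α => p.1 • p.2)
      = (fun p : G × α => p.1 • p.2) ∘ Prod.map (g * ·) id := by
    funext p
    simp [mul_smul]
  rw [Measure.groupAverage, Measure.map_map (measurable_const_smul g) hact, hcomp,
    ← Measure.map_map hact (hmul.prodMap measurable_id),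
    ← Measure.map_prod_map _ _ hmul measurable_id, Measure.map_id, map_mul_left_eq_self]

theorem Measure.rnDeriv_smul_ae_eq [MeasurableSMul G α] (μ ν : Measure α) [SigmaFinite μ]
    [SigmaFinite ν] [SMulInvariantMeasure G α μ] [SMulInvariantMeasure G α ν] (g : G) :
    (fun x => μ.rnDeriv ν (g • x)) =ᵐ[ν] μ.rnDeriv ν := by
  have := (measurableEmbedding_const_smul g).rnDeriv_map μ ν
  rwa [(measurePreserving_smul g μ).map_eq, (measurePreserving_smul g ν).map_eq] at this

end GroupAverage

end MeasureTheory

section RelativeEntropy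

variable {α : Type*} [MeasurableSpace α] {μ ρ ν : Measure α}

theorem entRel_eq_neg_integral_log_rnDeriv [SigmaFinite μ] [SigmaFinite ν] (hμν : μ ≪ ν) :
    entRel μ ν = -∫ x, log (μ.rnDeriv ν x).toReal ∂μ := by
  rw [entRel, ← integral_rnDeriv_smul hμν]
  rfl

theorem integrable_mul_log_rnDeriv_iff [SigmaFinite μ] [SigmaFinite ν] (hμν : μ ≪ ν) :
    Integrable (fun x => (μ.rnDeriv ν x).toReal * log (μ.rnDeriv ν x).toReal) ν ↔
      Integrable (fun x => log (μ.rnDeriv ν x).toReal) μ :=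
  integrable_rnDeriv_smul_iff hμν

theorem log_rnDeriv_ae_eq_add [SigmaFinite μ] [SigmaFinite ρ] [SigmaFinite ν]
    (hμρ : μ ≪ ρ) (hρν : ρ ≪ ν) :
    ∀ᵐ x ∂μ, log (μ.rnDeriv ν x).toReal
      = log (μ.rnDeriv ρ x).toReal + log (ρ.rnDeriv ν x).toReal := by
  have hμν := hμρ.trans hρν
  filter_upwards [hμν.ae_le (Measure.rnDeriv_mul_rnDeriv hμρ), Measure.rnDeriv_pos hμρ,
    hμρ.ae_le (Measure.rnDeriv_lt_top μ ρ), hμρ.ae_le (Measure.rnDeriv_pos hρν),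
    hμν.ae_le (Measure.rnDeriv_lt_top ρ ν)] with x h_mul hμρ_pos hμρ_lt hρν_pos hρν_lt
  rw [← h_mul, Pi.mul_apply, ENNReal.toReal_mul,
    log_mul (ENNReal.toReal_pos hμρ_pos.ne' hμρ_lt.ne).ne'
      (ENNReal.toReal_pos hρν_pos.ne' hρν_lt.ne).ne']

theorem entRel_eq_add_of_integral_log_rnDeriv_eq [SigmaFinite μ] [SigmaFinite ρ] [SigmaFinite ν]
    (hμρ : μ ≪ ρ) (hρν : ρ ≪ ν)
    (hμν_int : Integrable
      (fun x => (μ.rnDeriv ν x).toReal * log (μ.rnDeriv ν x).toReal) ν)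
    (hμρ_int : Integrable
      (fun x => (μ.rnDeriv ρ x).toReal * log (μ.rnDeriv ρ x).toReal) ρ)
    (h_mean : ∫ x, log (ρ.rnDeriv ν x).toReal ∂ρ = ∫ x, log (ρ.rnDeriv ν x).toReal ∂μ) :
    entRel μ ν = entRel μ ρ + entRel ρ ν := by
  have hμν := hμρ.trans hρν
  have h_chain := log_rnDeriv_ae_eq_add hμρ hρν
  have I_μν := (integrable_mul_log_rnDeriv_iff hμν).1 hμν_int
  have I_μρ := (integrable_mul_log_rnDeriv_iff hμρ).1 hμρ_int
  have I_ρν : Integrable (fun x => log (ρ.rnDeriv ν x).toReal) μ :=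
    (I_μν.sub I_μρ).congr (by filter_upwards [h_chain] with x hx; simp [hx])
  rw [entRel_eq_neg_integral_log_rnDeriv hμν, entRel_eq_neg_integral_log_rnDeriv hμρ,
    entRel_eq_neg_integral_log_rnDeriv hρν, h_mean, integral_congr_ae h_chain,
    integral_add I_μρ I_ρν, neg_add]

end RelativeEntropy

theorem relative_entropy_group_average_chain_rule_general
    {α : Type*} [MeasurableSpace α]
    {G : Type*} [Group G] [TopologicalSpace G] [IsTopologicalGroup G]
    [MeasurableSpace G] [BorelSpace G]
    (h : Measure G) [h.IsHaarMeasure] [IsProbabilityMeasure h]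
    [MulAction G α]
    (hmeas : Measurable (fun p : G × α => p.1 • p.2))
    (μ ν : Measure α) [IsProbabilityMeasure μ] [IsProbabilityMeasure ν]
    (μG : Measure α)
    (hμG : μG = (h.prod μ).map (fun p : G × α => p.1 • p.2))
    (hinv : ν = (h.prod ν).map (fun p : G × α => p.1 • p.2))
    (hacμG : μ ≪ μG) (hacGν : μG ≪ ν)
    (hint : Integrable
      (fun x => ((μ.rnDeriv ν x).toReal) * Real.log ((μ.rnDeriv ν x).toReal)) ν)
    (hint1 : Integrable
      (fun x => ((μ.rnDeriv μG x).toReal) * Real.log ((μ.rnDeriv μG x).toReal)) μG) :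
    entRel μ ν = entRel μ μG + entRel μG ν := by
  have : MeasurableSMul₂ G α := ⟨hmeas⟩
  change μG = h.groupAverage μ at hμG
  change ν = h.groupAverage ν at hinv
  have : IsProbabilityMeasure μG := hμG ▸ Measure.isProbabilityMeasure_map hmeas.aemeasurable
  have : SMulInvariantMeasure G α μG := by
    rw [hμG]; exact h.smulInvariantMeasure_groupAverage μ
  have : SMulInvariantMeasure G α ν := by
    rw [hinv]; exact h.smulInvariantMeasure_groupAverage ν
  refine entRel_eq_add_of_integral_log_rnDeriv_eq hacμG hacGν hint hint1 ?_
  have h_inv : ∀ g : G, ∀ᵐ x ∂μ,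
      log (μG.rnDeriv ν (g • x)).toReal = log (μG.rnDeriv ν x).toReal := fun g => by
    filter_upwards [(hacμG.trans hacGν).ae_le (Measure.rnDeriv_smul_ae_eq μG ν g)] with x hx
    rw [hx]
  have := h.integral_groupAverage_of_ae_smul_eq
    (Measure.measurable_rnDeriv μG ν).ennreal_toReal.log h_inv
  rwa [← hμG] at this

/-- chain rule for relative entropy through group averaging:
if `ν` is invariant under Haar averaging then
`Ent(μ|ν) = Ent(μ|μ_G) + Ent(μ_G|ν)`. -/
theorem relative_entropy_group_average_chain_rule
    {α : Type*} [MeasurableSpace α]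
    {G : Type*} [Group G] [TopologicalSpace G] [IsTopologicalGroup G]
    [CompactSpace G] [MeasurableSpace G] [BorelSpace G]
    (h : Measure G) [h.IsHaarMeasure] [IsProbabilityMeasure h]
    [MulAction G α]
    (hmeas : Measurable (fun p : G × α => p.1 • p.2))
    (μ ν : Measure α) [IsProbabilityMeasure μ] [IsProbabilityMeasure ν]
    (μG : Measure α)
    (hμG : μG = (h.prod μ).map (fun p : G × α => p.1 • p.2))
    (hinv : ν = (h.prod ν).map (fun p : G × α => p.1 • p.2))
    (hac : μ ≪ ν) (hacμG : μ ≪ μG) (hacGν : μG ≪ ν)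
    (hint : Integrable
      (fun x => ((μ.rnDeriv ν x).toReal) * Real.log ((μ.rnDeriv ν x).toReal)) ν)
    (hint1 : Integrable
      (fun x => ((μ.rnDeriv μG x).toReal) * Real.log ((μ.rnDeriv μG x).toReal)) μG)
    (hint2 : Integrable
      (fun x => ((μG.rnDeriv ν x).toReal) * Real.log ((μG.rnDeriv ν x).toReal)) ν) :
    entRel μ ν = entRel μ μG + entRel μG ν :=
  relative_entropy_group_average_chain_rule_general h hmeas μ ν μG hμG hinv hacμG hacGν hint hint1
end

section
/- Relative entropy to a product measure is subadditive over marginals: for probability measures μ on X₁ × X₂ and ν₁ on X₁, ν₂ on X₂, one has Ent(μ | ν₁ ⊗ ν₂) ≤ Ent(q₁μ | ν₁) + Ent(q₂μ | ν₂), where q_iμ are the marginals of μ. -/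
open MeasureTheory Real

/-!
Write `q₁, q₂` for the marginals of `μ`. Since `d(q₁ ⊗ q₂)/d(ν₁ ⊗ ν₂) = dq₁/dν₁ ⊗ dq₂/dν₂`,
the chain rule for Radon–Nikodym derivatives splits the log-likelihood ratio `μ`-a.e. as
`log dμ/d(ν₁ ⊗ ν₂) = log dμ/d(q₁ ⊗ q₂) + log dq₁/dν₁ ∘ fst + log dq₂/dν₂ ∘ snd`.
Integrating against `μ` gives `KL(μ‖ν₁ ⊗ ν₂) = KL(μ‖q₁ ⊗ q₂) + KL(q₁‖ν₁) + KL(q₂‖ν₂)`,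
and Gibbs' inequality `KL(μ‖q₁ ⊗ q₂) ≥ 0` yields the claim, as `Ent = -KL`.
-/

open scoped ENNReal

lemma entRel_eq_neg_integral_llr {α : Type*} [MeasurableSpace α] {μ ν : Measure α}
    [SigmaFinite μ] [μ.HaveLebesgueDecomposition ν] (h : μ ≪ ν) :
    entRel μ ν = -∫ x, llr μ ν x ∂μ := by
  rw [entRel, integral_rnDeriv_mul_log h]

namespace MeasureTheory

variable {α β : Type*} [MeasurableSpace α] [MeasurableSpace β]

lemma ae_toReal_rnDeriv_ne_zero {μ ν : Measure α} [SigmaFinite μ]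
    [μ.HaveLebesgueDecomposition ν] (h : μ ≪ ν) : ∀ᵐ x ∂μ, (μ.rnDeriv ν x).toReal ≠ 0 := by
  filter_upwards [Measure.rnDeriv_pos h, h.ae_le (Measure.rnDeriv_ne_top μ ν)] with x hpos htop
  exact (ENNReal.toReal_pos hpos.ne' htop).ne'

lemma llr_ae_eq_of_rnDeriv_ae_eq_mul {μ ν : Measure α} [SigmaFinite μ]
    [μ.HaveLebesgueDecomposition ν] {f g : α → ℝ≥0∞} (h : μ ≪ ν) (hfg : μ.rnDeriv ν =ᵐ[μ] f * g) :
    llr μ ν =ᵐ[μ] fun x => log (f x).toReal + log (g x).toReal := by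
  filter_upwards [hfg, ae_toReal_rnDeriv_ne_zero h] with x hx hne
  rw [hx, Pi.mul_apply, ENNReal.toReal_mul] at hne
  rw [llr, hx, Pi.mul_apply, ENNReal.toReal_mul,
    Real.log_mul (left_ne_zero_of_mul hne) (right_ne_zero_of_mul hne)]

lemma llr_ae_eq_llr_add_llr {μ ρ ν : Measure α} [SigmaFinite μ] [SigmaFinite ρ] [SigmaFinite ν]
    (hμρ : μ ≪ ρ) (hρν : ρ ≪ ν) : llr μ ν =ᵐ[μ] llr μ ρ + llr ρ ν :=
  llr_ae_eq_of_rnDeriv_ae_eq_mul (hμρ.trans hρν)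
    (Filter.EventuallyEq.symm <| (hμρ.trans hρν).ae_le (Measure.rnDeriv_mul_rnDeriv hμρ))

lemma absolutelyContinuous_withDensity_of_ae_ne_zero {μ ν : Measure α} {f : α → ℝ≥0∞}
    (hf : Measurable f) (h : μ ≪ ν) (hf₀ : ∀ᵐ x ∂μ, f x ≠ 0) : μ ≪ ν.withDensity f := by
  refine Measure.AbsolutelyContinuous.mk fun s hs hs₀ => ?_
  rw [withDensity_apply _ hs, lintegral_eq_zero_iff hf, Filter.EventuallyEq,
    ae_restrict_iff' hs] at hs₀
  rw [measure_eq_zero_iff_ae_notMem]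
  filter_upwards [h.ae_le hs₀, hf₀] with x hzero hne hx using hne (hzero hx)

section Prod

variable {μ₁ ν₁ : Measure α} {μ₂ ν₂ : Measure β}
  [SigmaFinite μ₁] [SigmaFinite ν₁] [SigmaFinite μ₂] [SigmaFinite ν₂]

lemma prod_eq_withDensity_rnDeriv (h₁ : μ₁ ≪ ν₁) (h₂ : μ₂ ≪ ν₂) :
    μ₁.prod μ₂ = (ν₁.prod ν₂).withDensity fun z => μ₁.rnDeriv ν₁ z.1 * μ₂.rnDeriv ν₂ z.2 := by
  have h := prod_withDensity (μ := ν₁) (ν := ν₂)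
    (Measure.measurable_rnDeriv μ₁ ν₁) (Measure.measurable_rnDeriv μ₂ ν₂)
  rwa [Measure.withDensity_rnDeriv_eq _ _ h₁, Measure.withDensity_rnDeriv_eq _ _ h₂] at h

lemma llr_prod_ae_eq (h₁ : μ₁ ≪ ν₁) (h₂ : μ₂ ≪ ν₂) :
    llr (μ₁.prod μ₂) (ν₁.prod ν₂) =ᵐ[μ₁.prod μ₂] fun z => llr μ₁ ν₁ z.1 + llr μ₂ ν₂ z.2 := by
  have hrn : (μ₁.prod μ₂).rnDeriv (ν₁.prod ν₂) =ᵐ[ν₁.prod ν₂]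
      fun z => μ₁.rnDeriv ν₁ z.1 * μ₂.rnDeriv ν₂ z.2 := by
    conv_lhs => rw [prod_eq_withDensity_rnDeriv h₁ h₂]
    exact Measure.rnDeriv_withDensity _ (by fun_prop)
  exact llr_ae_eq_of_rnDeriv_ae_eq_mul (h₁.prod h₂) ((h₁.prod h₂).ae_le hrn)

end Prod

section Marginals

variable {μ : Measure (α × β)} {ν₁ : Measure α} {ν₂ : Measure β}

lemma map_fst_absolutelyContinuous [SFinite ν₂] (h : μ ≪ ν₁.prod ν₂) : μ.map Prod.fst ≪ ν₁ := by
  refine Measure.AbsolutelyContinuous.mk fun s hs hs0 => ?_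
  rw [Measure.map_apply measurable_fst hs, ← Set.prod_univ]
  exact h (by rw [Measure.prod_prod, hs0, zero_mul])

lemma map_snd_absolutelyContinuous [SFinite ν₂] (h : μ ≪ ν₁.prod ν₂) : μ.map Prod.snd ≪ ν₂ := by
  refine Measure.AbsolutelyContinuous.mk fun s hs hs0 => ?_
  rw [Measure.map_apply measurable_snd hs, ← Set.univ_prod]
  exact h (by rw [Measure.prod_prod, hs0, mul_zero])

lemma integrable_llr_map_fst_add_llr_map_snd
    (hint₁ : Integrable (llr (μ.map Prod.fst) ν₁) (μ.map Prod.fst))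
    (hint₂ : Integrable (llr (μ.map Prod.snd) ν₂) (μ.map Prod.snd)) :
    Integrable (fun z => llr (μ.map Prod.fst) ν₁ z.1 + llr (μ.map Prod.snd) ν₂ z.2) μ :=
  (hint₁.comp_measurable measurable_fst).add (hint₂.comp_measurable measurable_snd)

variable [IsFiniteMeasure μ] [SigmaFinite ν₁] [SigmaFinite ν₂]

/-- The density `dq₁/dν₁ ⊗ dq₂/dν₂` of the product of the marginals is positive `μ`-a.e. -/
lemma absolutelyContinuous_prod_map_fst_map_snd (h : μ ≪ ν₁.prod ν₂) :
    μ ≪ (μ.map Prod.fst).prod (μ.map Prod.snd) := by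
  have h₁ := map_fst_absolutelyContinuous h
  have h₂ := map_snd_absolutelyContinuous h
  have hpos₁ : ∀ᵐ z ∂μ, 0 < (μ.map Prod.fst).rnDeriv ν₁ z.1 :=
    ae_of_ae_map measurable_fst.aemeasurable (Measure.rnDeriv_pos h₁)
  have hpos₂ : ∀ᵐ z ∂μ, 0 < (μ.map Prod.snd).rnDeriv ν₂ z.2 :=
    ae_of_ae_map measurable_snd.aemeasurable (Measure.rnDeriv_pos h₂)
  rw [prod_eq_withDensity_rnDeriv h₁ h₂]
  refine absolutelyContinuous_withDensity_of_ae_ne_zero (by fun_prop) h ?_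
  filter_upwards [hpos₁, hpos₂] with z hz₁ hz₂
  exact (ENNReal.mul_pos hz₁.ne' hz₂.ne').ne'

lemma llr_ae_eq_llr_prod_map_add (h : μ ≪ ν₁.prod ν₂) :
    llr μ (ν₁.prod ν₂) =ᵐ[μ] fun z => llr μ ((μ.map Prod.fst).prod (μ.map Prod.snd)) z +
      (llr (μ.map Prod.fst) ν₁ z.1 + llr (μ.map Prod.snd) ν₂ z.2) := by
  have hμq := absolutelyContinuous_prod_map_fst_map_snd h
  have hq := (map_fst_absolutelyContinuous h).prod (map_snd_absolutelyContinuous h)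
  filter_upwards [llr_ae_eq_llr_add_llr hμq hq,
    hμq.ae_le (llr_prod_ae_eq (map_fst_absolutelyContinuous h) (map_snd_absolutelyContinuous h))]
    with z hchain hprod
  rw [hchain, Pi.add_apply, hprod]

lemma integrable_llr_prod_map_fst_map_snd (h : μ ≪ ν₁.prod ν₂)
    (hint : Integrable (llr μ (ν₁.prod ν₂)) μ)
    (hint₁ : Integrable (llr (μ.map Prod.fst) ν₁) (μ.map Prod.fst))
    (hint₂ : Integrable (llr (μ.map Prod.snd) ν₂) (μ.map Prod.snd)) :
    Integrable (llr μ ((μ.map Prod.fst).prod (μ.map Prod.snd))) μ := by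
  refine (hint.sub (integrable_llr_map_fst_add_llr_map_snd hint₁ hint₂)).congr ?_
  filter_upwards [llr_ae_eq_llr_prod_map_add h] with z hz
  rw [Pi.sub_apply, hz, add_sub_cancel_right]

lemma integral_llr_prod_eq_add (h : μ ≪ ν₁.prod ν₂)
    (hint : Integrable (llr μ (ν₁.prod ν₂)) μ)
    (hint₁ : Integrable (llr (μ.map Prod.fst) ν₁) (μ.map Prod.fst))
    (hint₂ : Integrable (llr (μ.map Prod.snd) ν₂) (μ.map Prod.snd)) :
    ∫ z, llr μ (ν₁.prod ν₂) z ∂μ =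
      ∫ z, llr μ ((μ.map Prod.fst).prod (μ.map Prod.snd)) z ∂μ +
        (∫ x, llr (μ.map Prod.fst) ν₁ x ∂(μ.map Prod.fst) +
          ∫ y, llr (μ.map Prod.snd) ν₂ y ∂(μ.map Prod.snd)) := by
  have hfst : ∫ x, llr (μ.map Prod.fst) ν₁ x ∂(μ.map Prod.fst) =
      ∫ z, llr (μ.map Prod.fst) ν₁ z.1 ∂μ :=
    integral_map measurable_fst.aemeasurable (stronglyMeasurable_llr _ _).aestronglyMeasurable
  have hsnd : ∫ y, llr (μ.map Prod.snd) ν₂ y ∂(μ.map Prod.snd) =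
      ∫ z, llr (μ.map Prod.snd) ν₂ z.2 ∂μ :=
    integral_map measurable_snd.aemeasurable (stronglyMeasurable_llr _ _).aestronglyMeasurable
  rw [hfst, hsnd,
    ← integral_add (f := fun z : α × β => llr (μ.map Prod.fst) ν₁ z.1)
      (g := fun z : α × β => llr (μ.map Prod.snd) ν₂ z.2)
      (hint₁.comp_measurable measurable_fst) (hint₂.comp_measurable measurable_snd),
    ← integral_add (integrable_llr_prod_map_fst_map_snd h hint hint₁ hint₂)
      (integrable_llr_map_fst_add_llr_map_snd hint₁ hint₂)]
  exact integral_congr_ae (llr_ae_eq_llr_prod_map_add h)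

end Marginals

end MeasureTheory

open MeasureTheory

/-- relative entropy to a product measure is subadditive over the
marginals: `Ent(μ | ν₁ ⊗ ν₂) ≤ Ent(q₁μ | ν₁) + Ent(q₂μ | ν₂)`. -/
theorem relative_entropy_product_subadditive
    {X₁ X₂ : Type*} [MeasurableSpace X₁] [MeasurableSpace X₂]
    (μ : Measure (X₁ × X₂)) [IsProbabilityMeasure μ]
    (ν₁ : Measure X₁) (ν₂ : Measure X₂)
    [IsProbabilityMeasure ν₁] [IsProbabilityMeasure ν₂]
    (hac : μ ≪ ν₁.prod ν₂)
    (hint : Integrable (fun x => ((μ.rnDeriv (ν₁.prod ν₂) x).toReal) *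
      Real.log ((μ.rnDeriv (ν₁.prod ν₂) x).toReal)) (ν₁.prod ν₂))
    (hintq1 : Integrable (fun x => (((μ.map Prod.fst).rnDeriv ν₁ x).toReal) *
      Real.log (((μ.map Prod.fst).rnDeriv ν₁ x).toReal)) ν₁)
    (hintq2 : Integrable (fun x => (((μ.map Prod.snd).rnDeriv ν₂ x).toReal) *
      Real.log (((μ.map Prod.snd).rnDeriv ν₂ x).toReal)) ν₂) :
    entRel μ (ν₁.prod ν₂) ≤
      entRel (μ.map Prod.fst) ν₁ + entRel (μ.map Prod.snd) ν₂ := by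
  have hac₁ := map_fst_absolutelyContinuous hac
  have hac₂ := map_snd_absolutelyContinuous hac
  rw [integrable_rnDeriv_mul_log_iff hac] at hint
  rw [integrable_rnDeriv_mul_log_iff hac₁] at hintq1
  rw [integrable_rnDeriv_mul_log_iff hac₂] at hintq2
  have : IsProbabilityMeasure (μ.map Prod.fst) := Measure.isProbabilityMeasure_map (by fun_prop)
  have : IsProbabilityMeasure (μ.map Prod.snd) := Measure.isProbabilityMeasure_map (by fun_prop)
  have hgibbs := InformationTheory.integral_llr_add_sub_measure_univ_nonneg
    (absolutelyContinuous_prod_map_fst_map_snd hac)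
    (integrable_llr_prod_map_fst_map_snd hac hint hintq1 hintq2)
  rw [probReal_univ, probReal_univ, add_sub_cancel_right] at hgibbs
  rw [entRel_eq_neg_integral_llr hac, entRel_eq_neg_integral_llr hac₁,
    entRel_eq_neg_integral_llr hac₂, integral_llr_prod_eq_add hac hint hintq1 hintq2]
  linarith
end

section
/- Conditional entropy chain rule with group averaging: let μ be a probability measure of finite entropy on R^d equipped with a measure-preserving action of a compact group G with Haar probability measure h, let μ_G be the average over G of g_*μ, and assume μ ≪ μ_G with density ρ. Then -∫_{R^d} ρ log ρ dμ_G = ∫∫ [the relative entropy of the 'fiber density' u ↦ ρ(u·x) with respect to Haar measure h] dμ_G(x), i.e. Ent(μ|μ_G) = ∫ Ent(ρ(u·x) h(du) | h(du)) dμ_G(x). -/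
open MeasureTheory Real

/-! The averaged measure `μ_G`, the image of `h ⊗ μ` under `(u, x) ↦ u • x`, is `G`-invariant
because `h` is left invariant. For a `G`-invariant measure `ν` and a probability measure `h`,
the skew map `(u, x) ↦ (u, u • x)` preserves `h ⊗ ν`, so `ν` is itself the image of `h ⊗ ν`
under the action map; Fubini then gives `∫ f dν = ∫∫ f (u • x) dh(u) dν(x)` for every
`ν`-integrable `f`, which for `f = ρ log ρ` is the claimed disintegration of the entropy. -/

namespace MeasureTheory

variable {G α E : Type*} [Group G] [MeasurableSpace G] [MulAction G α] [MeasurableSpace α]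
  [MeasurableSMul₂ G α] [NormedAddCommGroup E] [NormedSpace ℝ E]

theorem smulInvariantMeasure_map_smul_prod [MeasurableMul G] (h : Measure G) [SFinite h]
    [h.IsMulLeftInvariant] (μ : Measure α) [SFinite μ] :
    SMulInvariantMeasure G α ((h.prod μ).map fun p => p.1 • p.2) := by
  have hact : Measurable fun p : G × α => p.1 • p.2 := measurable_smul
  refine ((smulInvariantMeasure_tfae G _).out 0 5).2 fun u => ?_
  have hcomp : ((u • ·) ∘ fun p : G × α => p.1 • p.2) =
      (fun p : G × α => p.1 • p.2) ∘ Prod.map (u * ·) id := by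
    funext p
    simp [mul_smul]
  rw [Measure.map_map (measurable_const_smul u) hact, hcomp,
    ← Measure.map_map hact ((measurable_const_mul u).prodMap measurable_id),
    ← Measure.map_prod_map _ _ (measurable_const_mul u) measurable_id,
    map_mul_left_eq_self, Measure.map_id]

theorem map_smul_prod_eq_self (h : Measure G) [IsProbabilityMeasure h] (ν : Measure α)
    [SFinite ν] [SMulInvariantMeasure G α ν] :
    (h.prod ν).map (fun p => p.1 • p.2) = ν := by
  have hact : Measurable fun p : G × α => p.1 • p.2 := measurable_smul
  have hskew : MeasurePreserving (fun p : G × α => (p.1, p.1 • p.2)) (h.prod ν) (h.prod ν) :=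
    (MeasurePreserving.id h).skew_product hact
      (.of_forall fun u => (measurePreserving_smul u ν).map_eq)
  calc (h.prod ν).map (fun p => p.1 • p.2)
      = ((h.prod ν).map fun p => (p.1, p.1 • p.2)).map Prod.snd :=
        (Measure.map_map measurable_snd hskew.measurable).symm
    _ = ν := by rw [hskew.map_eq, Measure.map_snd_prod, measure_univ, one_smul]

theorem integral_integral_smul_eq_integral (h : Measure G) [IsProbabilityMeasure h]
    (ν : Measure α) [SFinite ν] [SMulInvariantMeasure G α ν] {f : α → E}
    (hf : Integrable f ν) :
    ∫ x, ∫ u, f (u • x) ∂h ∂ν = ∫ x, f x ∂ν := by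
  have hmap := map_smul_prod_eq_self h ν
  have hact : Measurable fun p : G × α => p.1 • p.2 := measurable_smul
  have hf_map : Integrable f ((h.prod ν).map fun p => p.1 • p.2) := by
    rwa [hmap]
  calc ∫ x, ∫ u, f (u • x) ∂h ∂ν = ∫ p, f (p.1 • p.2) ∂(h.prod ν) :=
        (integral_prod_symm _ (hf_map.comp_measurable hact)).symm
    _ = ∫ x, f x ∂((h.prod ν).map fun p => p.1 • p.2) :=
        (integral_map hact.aemeasurable hf_map.aestronglyMeasurable).symm
    _ = ∫ x, f x ∂ν := by rw [hmap]

end MeasureTheory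

theorem relative_entropy_orbit_disintegration_general
    {d : ℕ} {G : Type*} [Group G] [TopologicalSpace G] [IsTopologicalGroup G]
    [MeasurableSpace G] [BorelSpace G]
    (h : Measure G) [h.IsHaarMeasure] [IsProbabilityMeasure h]
    [MulAction G (Fin d → ℝ)]
    (hmeas : Measurable (fun p : G × (Fin d → ℝ) => p.1 • p.2))
    (μ : Measure (Fin d → ℝ)) [IsProbabilityMeasure μ]
    (μG : Measure (Fin d → ℝ))
    (hμG : μG = (h.prod μ).map (fun p : G × (Fin d → ℝ) => p.1 • p.2))
    (ρ : (Fin d → ℝ) → ℝ)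
    (hint : Integrable (fun x => ρ x * Real.log (ρ x)) μG) :
    -∫ x, ρ x * Real.log (ρ x) ∂μG =
      ∫ x, (-∫ u, ρ (u • x) * Real.log (ρ (u • x)) ∂h) ∂μG := by
  have : MeasurableSMul₂ G (Fin d → ℝ) := ⟨hmeas⟩
  subst hμG
  have := smulInvariantMeasure_map_smul_prod h μ
  rw [integral_neg, integral_integral_smul_eq_integral h _ hint]

/-- disintegration of the relative entropy `Ent(μ|μ_G)` over the
orbits of a measure-preserving compact group action: for the density
`ρ = dμ/dμ_G`, `-∫ ρ log ρ dμ_G = ∫ Ent(ρ(u•x) h(du) | h(du)) dμ_G(x)`. -/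
theorem relative_entropy_orbit_disintegration
    {d : ℕ} {G : Type*} [Group G] [TopologicalSpace G] [IsTopologicalGroup G]
    [CompactSpace G] [MeasurableSpace G] [BorelSpace G]
    (h : Measure G) [h.IsHaarMeasure] [IsProbabilityMeasure h]
    [MulAction G (Fin d → ℝ)]
    (hmeas : Measurable (fun p : G × (Fin d → ℝ) => p.1 • p.2))
    (hpres : ∀ g : G, MeasurePreserving (fun x : Fin d → ℝ => g • x) volume volume)
    (μ : Measure (Fin d → ℝ)) [IsProbabilityMeasure μ]
    (hacvol : μ ≪ volume)
    (hintent : Integrable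
      (fun x => ((μ.rnDeriv volume x).toReal) * Real.log ((μ.rnDeriv volume x).toReal)))
    (μG : Measure (Fin d → ℝ))
    (hμG : μG = (h.prod μ).map (fun p : G × (Fin d → ℝ) => p.1 • p.2))
    (hac : μ ≪ μG)
    (ρ : (Fin d → ℝ) → ℝ) (hρm : Measurable ρ) (hρnn : ∀ x, 0 ≤ ρ x)
    (hρ : μ = μG.withDensity (fun x => ENNReal.ofReal (ρ x)))
    (hdens : ∀ᵐ x ∂μG, ∫ u, ρ (u • x) ∂h = 1)
    (hint : Integrable (fun x => ρ x * Real.log (ρ x)) μG)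
    (hintfib : Integrable
      (fun x => ∫ u, ρ (u • x) * Real.log (ρ (u • x)) ∂h) μG) :
    -∫ x, ρ x * Real.log (ρ x) ∂μG =
      ∫ x, (-∫ u, ρ (u • x) * Real.log (ρ (u • x)) ∂h) ∂μG :=
  relative_entropy_orbit_disintegration_general h hmeas μ μG hμG ρ hint
end
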